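/- Boundary sign alternation along gyration orbits: let α be a bottom-row plaquette of the n×n FPL domain that is a cell of the H_+ round (so that its bottom edge lies in a boundary cell of the H_− round). For φ ∈ Fpl(n,+) define ν_k = N_α(G^k(φ)) for k ≥ 0. Then the nonzero terms of the sequence (ν_k) alternate in sign: whenever k < m, ν_k ≠ 0, ν_m ≠ 0, and ν_l = 0 for all k < l < m, one has ν_m = −ν_k. -/
import Mathlib


open scoped Classical

/-! ### Link patterns

A link pattern on `2n` cyclically ordered points is a fixed-point-free noncrossing
involution.  The point `i : ZMod (2*n)` represents the label `lbl (2*n) i ∈ {1,…,2n}`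
(so label arithmetic is arithmetic in `ZMod (2*n)`). -/

instance instNeZeroTwoMul (n : ℕ) [NeZero n] : NeZero (2 * n) :=
  ⟨by have := NeZero.ne n; omega⟩

/-- The label in `{1,…,M}` represented by a point of `ZMod M`. -/
def lbl (M : ℕ) (i : ZMod M) : ℕ := if i.val = 0 then M else i.val

/-- A fixed-point-free involution of the `2n` points on a circle which is noncrossing. -/
def IsLinkPattern (n : ℕ) (f : ZMod (2 * n) → ZMod (2 * n)) : Prop :=
  Function.Involutive f ∧ (∀ i, f i ≠ i) ∧
    ∀ i j : ZMod (2 * n), ¬ (i.val < j.val ∧ j.val < (f i).val ∧ (f i).val < (f j).val)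

/-- The set `LP(n)` of link patterns on `2n` points, as a subtype. -/
abbrev LinkPattern (n : ℕ) := {f : ZMod (2 * n) → ZMod (2 * n) // IsLinkPattern n f}

/-- Rotation `R`: `R π` pairs `i-1` with `j-1` whenever `π` pairs `i` with `j`. -/
def rotMap (M : ℕ) (f : ZMod M → ZMod M) : ZMod M → ZMod M := fun i => f (i + 1) - 1

/-- Inverse rotation `R⁻¹`. -/
def rotInvMap (M : ℕ) (f : ZMod M → ZMod M) : ZMod M → ZMod M := fun i => f (i - 1) + 1

/-- The Temperley–Lieb map `e_j` (here `j : ZMod M` represents the label `lbl M j`):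
if `π` pairs `j` with `j+1` it does nothing, otherwise it re-pairs `j` with `j+1`
and `π(j)` with `π(j+1)`. -/
def eMap (M : ℕ) (j : ZMod M) (f : ZMod M → ZMod M) : ZMod M → ZMod M := fun i =>
  if f j = j + 1 then f i
  else if i = j then j + 1
  else if i = j + 1 then j
  else if i = f j then f (j + 1)
  else if i = f (j + 1) then f j
  else f i

/-! ### The `n × n` FPL domain

Vertices are `(x,y)` with `1 ≤ x,y ≤ n`.  `SqEdge.h x y` is the horizontal edge joining
`(x,y)` and `(x+1,y)` (valid for `0 ≤ x ≤ n`, `1 ≤ y ≤ n`; `x = 0` and `x = n` give the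
west/east external edges); `SqEdge.v x y` is the vertical edge joining `(x,y)` and
`(x,y+1)` (valid for `1 ≤ x ≤ n`, `0 ≤ y ≤ n`; `y = 0` and `y = n` give the south/north
external edges).  A configuration is a map `SqEdge → Bool` (`true` = black). -/

inductive SqEdge : Type
  | h : ℕ → ℕ → SqEdge
  | v : ℕ → ℕ → SqEdge
deriving DecidableEq

/-- Validity of an edge for the `n × n` domain. -/
def validB (n : ℕ) : SqEdge → Bool
  | .h x y => decide (x ≤ n) && decide (1 ≤ y) && decide (y ≤ n)
  | .v x y => decide (1 ≤ x) && decide (x ≤ n) && decide (y ≤ n)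

/-- The external edge with counterclockwise label `k ∈ {1,…,4n}`, starting from the
bottom external edge of the corner vertex `(1,1)`. -/
def extEdge (n k : ℕ) : SqEdge :=
  if k ≤ n then .v k 0
  else if k ≤ 2 * n then .h n (k - n)
  else if k ≤ 3 * n then .v (3 * n + 1 - k) n
  else .h 0 (4 * n + 1 - k)

def IsExternal (n : ℕ) (e : SqEdge) : Prop := ∃ k, 1 ≤ k ∧ k ≤ 4 * n ∧ e = extEdge n k

/-- The west, east, south, north edges incident to the vertex `(x,y)`. -/
def wEdge (x y : ℕ) : SqEdge := .h (x - 1) y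
def eEdge (x y : ℕ) : SqEdge := .h x y
def sEdge (x y : ℕ) : SqEdge := .v x (y - 1)
def nEdge (x y : ℕ) : SqEdge := .v x y

def IncidentAt (e : SqEdge) (x y : ℕ) : Prop :=
  e = wEdge x y ∨ e = eEdge x y ∨ e = sEdge x y ∨ e = nEdge x y

def blackDeg (φ : SqEdge → Bool) (x y : ℕ) : ℕ :=
  (if φ (wEdge x y) then 1 else 0) + (if φ (eEdge x y) then 1 else 0) +
    (if φ (sEdge x y) then 1 else 0) + (if φ (nEdge x y) then 1 else 0)

/-- A fully-packed loop configuration on the `n × n` domain: it is supported on the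
valid edges, and every vertex is incident to exactly two black (and two white) edges. -/
def IsFpl (n : ℕ) (φ : SqEdge → Bool) : Prop :=
  (∀ e, φ e = true → validB n e = true) ∧
    ∀ x y, 1 ≤ x → x ≤ n → 1 ≤ y → y ≤ n → blackDeg φ x y = 2

/-- Alternating boundary colouring `τ₊` (external label `1` black). -/
def BPlus (n : ℕ) (φ : SqEdge → Bool) : Prop :=
  ∀ k, 1 ≤ k → k ≤ 4 * n → (φ (extEdge n k) = true ↔ k % 2 = 1)

/-- Complementary alternating boundary colouring `τ₋`. -/
def BMinus (n : ℕ) (φ : SqEdge → Bool) : Prop :=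
  ∀ k, 1 ≤ k → k ≤ 4 * n → (φ (extEdge n k) = true ↔ k % 2 = 0)

/-- Two (valid) edges of colour `b` sharing an internal vertex. -/
def adjC (n : ℕ) (b : Bool) (φ : SqEdge → Bool) (e e' : SqEdge) : Prop :=
  e ≠ e' ∧ validB n e = true ∧ validB n e' = true ∧ φ e = b ∧ φ e' = b ∧
    ∃ x y, 1 ≤ x ∧ x ≤ n ∧ 1 ≤ y ∧ y ≤ n ∧ IncidentAt e x y ∧ IncidentAt e' x y

/-- Connectivity through monochromatic paths of colour `b`. -/
def Conn (n : ℕ) (b : Bool) (φ : SqEdge → Bool) : SqEdge → SqEdge → Prop :=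
  Relation.ReflTransGen (adjC n b φ)

/-- In `Fpl(n,+)` the black external edge with black label `t ∈ {1,…,2n}` has overall
label `2t-1`.  `φ` has link pattern (matching) `g` iff for every point `i` the black
external edges with black labels `lbl i` and `lbl (g i)` are joined by a black path. -/
def RealizesP (n : ℕ) (φ : SqEdge → Bool) (g : ZMod (2 * n) → ZMod (2 * n)) : Prop :=
  ∀ i, Conn n true φ (extEdge n (2 * lbl (2 * n) i - 1)) (extEdge n (2 * lbl (2 * n) (g i) - 1))

/-- In `Fpl(n,-)` the black external edge with black label `t` has overall label `2t`
(black labelling starting from the bottom external edge of the vertex `(2,1)`). -/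
def RealizesM (n : ℕ) (φ : SqEdge → Bool) (g : ZMod (2 * n) → ZMod (2 * n)) : Prop :=
  ∀ i, Conn n true φ (extEdge n (2 * lbl (2 * n) i)) (extEdge n (2 * lbl (2 * n) (g i)))

/-- `Ψ_{n,+}(g)`: the number of FPLs in `Fpl(n,+)` with link pattern `g`. -/
noncomputable def PsiP (n : ℕ) (g : ZMod (2 * n) → ZMod (2 * n)) : ℕ :=
  Set.ncard {φ : SqEdge → Bool | IsFpl n φ ∧ BPlus n φ ∧ RealizesP n φ g}

/-- `Ψ_{n,-}(g)`: the number of FPLs in `Fpl(n,-)` with link pattern `g`. -/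
noncomputable def PsiM (n : ℕ) (g : ZMod (2 * n) → ZMod (2 * n)) : ℕ :=
  Set.ncard {φ : SqEdge → Bool | IsFpl n φ ∧ BMinus n φ ∧ RealizesM n φ g}

/-- The plaquette with lower-left corner `(x,y)` (for `1 ≤ x,y ≤ n-1`) has horizontal
edges `.h x y`, `.h x (y+1)` and vertical edges `.v x y`, `.v (x+1) y`.
`Nplaq φ x y` is `+1` if both horizontal edges are black and both vertical edges white,
`-1` in the complementary case, and `0` otherwise. -/
def Nplaq (φ : SqEdge → Bool) (x y : ℕ) : ℤ :=
  if φ (.h x y) = true ∧ φ (.h x (y + 1)) = true ∧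
      φ (.v x y) = false ∧ φ (.v (x + 1) y) = false then 1
  else if φ (.h x y) = false ∧ φ (.h x (y + 1)) = false ∧
      φ (.v x y) = true ∧ φ (.v (x + 1) y) = true then -1
  else 0

/-! ### Wieland gyration on the `n × n` domain.

For `H₊` the external edges are glued in the pairs `(1,2),(3,4),…`; the cells of the
resulting partition of the edge set are the interior plaquettes `(x,y)` with `x+y` odd,
together with boundary cells (of length 2 or 3) through the glued vertices.  For `H₋`
(pairs `(2,3),(4,5),…,(4n,1)`) the interior cells are the plaquettes with `x+y` even.
`H₊/H₋` complement the colours on every cell except the alternating 4-cells (interior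
plaquettes whose colours alternate), which are kept fixed. -/

/-- The interior cell (plaquette of parity `p`) containing the edge `e`, if any;
edges in no interior plaquette of parity `p` lie in a boundary cell. -/
def plaqOf (n p : ℕ) : SqEdge → Option (ℕ × ℕ)
  | .h x y =>
    if 1 ≤ x ∧ x ≤ n - 1 ∧ 1 ≤ y ∧ y ≤ n - 1 ∧ (x + y) % 2 = p then some (x, y)
    else if 1 ≤ x ∧ x ≤ n - 1 ∧ 2 ≤ y ∧ y ≤ n ∧ (x + y - 1) % 2 = p then some (x, y - 1)
    else none
  | .v x y =>
    if 1 ≤ x ∧ x ≤ n - 1 ∧ 1 ≤ y ∧ y ≤ n - 1 ∧ (x + y) % 2 = p then some (x, y)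
    else if 2 ≤ x ∧ x ≤ n ∧ 1 ≤ y ∧ y ≤ n - 1 ∧ (x + y - 1) % 2 = p then some (x - 1, y)
    else none

/-- Colours alternate around the plaquette `(x,y)`. -/
def altPlaq (φ : SqEdge → Bool) (x y : ℕ) : Bool :=
  (φ (.h x y) == φ (.h x (y + 1))) && (φ (.v x y) == φ (.v (x + 1) y)) &&
    (φ (.h x y) != φ (.v x y))

/-- One gyration round on the cells of parity `p`. -/
def gyrHalf (n p : ℕ) (φ : SqEdge → Bool) : SqEdge → Bool := fun e =>
  if validB n e then
    match plaqOf n p e with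
    | some (x, y) => if altPlaq φ x y then φ e else !(φ e)
    | none => !(φ e)
  else false

/-- The gyration round `H₊` (interior cells: plaquettes with `x+y` odd). -/
def Hplus (n : ℕ) : (SqEdge → Bool) → SqEdge → Bool := gyrHalf n 1

/-- The gyration round `H₋` (interior cells: plaquettes with `x+y` even). -/
def Hminus (n : ℕ) : (SqEdge → Bool) → SqEdge → Bool := gyrHalf n 0

/-- Wieland's gyration `G = H₋ ∘ H₊`. -/
def gyr (n : ℕ) (φ : SqEdge → Bool) : SqEdge → Bool := Hminus n (Hplus n φ)

/-- Complementation of the colours of all (valid) edges. -/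
def complV (n : ℕ) (φ : SqEdge → Bool) : SqEdge → Bool := fun e =>
  if validB n e then !(φ e) else false

/-- `H̃₊`: the round `H₊` followed by complementation (a map `Fpl(n,+) → Fpl(n,+)`). -/
def Htp (n : ℕ) (φ : SqEdge → Bool) : SqEdge → Bool := complV n (Hplus n φ)

/-- The orbit `{G^k φ : k ≥ 0}` of `φ` under gyration. -/
def orbitG (n : ℕ) (φ : SqEdge → Bool) : Set (SqEdge → Bool) :=
  Set.range fun k => (gyr n)^[k] φ



private lemma nplaq_ne_iff_alt (ψ : SqEdge → Bool) (x : ℕ) :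
    Nplaq ψ x 1 ≠ 0 ↔ altPlaq ψ x 1 = true := by
  unfold Nplaq altPlaq
  rcases h1 : ψ (.h x 1) <;> rcases h2 : ψ (.h x (1+1)) <;>
    rcases h3 : ψ (.v x 1) <;> rcases h4 : ψ (.v (x+1) 1) <;>
      simp [h1, h2, h3, h4]

private lemma nplaq_val (ψ : SqEdge → Bool) (x : ℕ) (h : Nplaq ψ x 1 ≠ 0) :
    Nplaq ψ x 1 = (if ψ (.h x 1) then 1 else -1) := by
  unfold Nplaq at *
  rcases h1 : ψ (.h x 1) <;> rcases h2 : ψ (.h x (1+1)) <;>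
    rcases h3 : ψ (.v x 1) <;> rcases h4 : ψ (.v (x+1) 1) <;>
      simp [h1, h2, h3, h4] at h ⊢

private lemma gyr_bottom_edge (n x : ℕ) (hx : 1 ≤ x) (hx' : x ≤ n - 1)
    (hpar : (x + 1) % 2 = 1) (ψ : SqEdge → Bool) :
    gyr n ψ (.h x 1) = (if altPlaq ψ x 1 then !(ψ (.h x 1)) else ψ (.h x 1)) := by
  have hn2 : 2 ≤ n := by omega
  have hv : validB n (SqEdge.h x 1) = true := by
    unfold validB; simp; omega
  have hp1 : plaqOf n 1 (SqEdge.h x 1) = some (x, 1) := by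
    simp only [plaqOf]
    rw [if_pos ⟨hx, hx', le_refl 1, by omega, hpar⟩]
  have hp0 : plaqOf n 0 (SqEdge.h x 1) = none := by
    simp only [plaqOf]
    rw [if_neg (by rintro ⟨-, -, -, -, h⟩; omega), if_neg (by rintro ⟨-, -, h, -⟩; omega)]
  unfold gyr Hminus Hplus gyrHalf
  rw [if_pos hv, hp0, if_pos hv, hp1]
  rcases haltp : altPlaq ψ x 1 <;> simp [haltp]

/-- **Boundary sign alternation along gyration orbits.**  For a bottom-row plaquette
`α = (x,1)` which is a cell of the `H₊` round (`x` even), the nonzero values of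
`ν_k = N_α(G^k φ)` alternate in sign. -/
theorem boundary_sign_alternation (n : ℕ) (hn : 1 ≤ n) (x : ℕ)
    (hx : 1 ≤ x) (hx' : x ≤ n - 1) (hpar : (x + 1) % 2 = 1)
    (φ : SqEdge → Bool) (hφ : IsFpl n φ ∧ BPlus n φ)
    (k m : ℕ) (hkm : k < m)
    (hk : Nplaq ((gyr n)^[k] φ) x 1 ≠ 0)
    (hm : Nplaq ((gyr n)^[m] φ) x 1 ≠ 0)
    (hmid : ∀ l, k < l → l < m → Nplaq ((gyr n)^[l] φ) x 1 = 0) :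
    Nplaq ((gyr n)^[m] φ) x 1 = - Nplaq ((gyr n)^[k] φ) x 1 := by
  have key : ∀ l, k < l → l ≤ m →
      ((gyr n)^[l] φ) (SqEdge.h x 1) = !(((gyr n)^[k] φ) (SqEdge.h x 1)) := by
    intro l
    induction l with
    | zero => omega
    | succ l ih =>
      intro h1 h2
      rw [Function.iterate_succ_apply', gyr_bottom_edge n x hx hx' hpar]
      rcases Nat.lt_or_ge k l with hkl | hkl
      · have h0 : Nplaq ((gyr n)^[l] φ) x 1 = 0 := hmid l hkl (by omega)
        have halt : altPlaq ((gyr n)^[l] φ) x 1 = false := by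
          rcases h : altPlaq ((gyr n)^[l] φ) x 1
          · rfl
          · exact absurd h0 ((nplaq_ne_iff_alt _ _).mpr h)
        rw [halt]
        simpa using ih hkl (by omega)
      · have hlk : l = k := by omega
        subst hlk
        have halt : altPlaq ((gyr n)^[l] φ) x 1 = true := (nplaq_ne_iff_alt _ _).mp hk
        rw [halt]
        simp
  have hb : ((gyr n)^[m] φ) (SqEdge.h x 1) = !(((gyr n)^[k] φ) (SqEdge.h x 1)) :=
    key m hkm le_rfl
  rw [nplaq_val _ _ hm, nplaq_val _ _ hk, hb]
  rcases ((gyr n)^[k] φ) (SqEdge.h x 1) <;> simp
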